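/- Let m ≥ 1 and N ≥ 1, let n : Fin m → ℕ with ∑_j n j = N, and let Δ = gcd_j (n j). Let c : ZMod N be an element of additive order g. Then the number of colorings f : ZMod N → Fin m with fiber cardinalities n (i.e., |f⁻¹{j}| = n j for all j) satisfying f(x + c) = f(x) for all x equals P(n/g) = (N/g)! / ∏_j (n j / g)! if g ∣ Δ, and equals 0 otherwise. -/

import Mathlib

/-- A coloring of the regular `N`-gon in `m` colors with multiplicities `n`:
a function `f : ZMod N → Fin m` whose fiber over each color `j` has cardinality `n j`. -/
def IsColoring (N m : ℕ) (n : Fin m → ℕ) (f : ZMod N → Fin m) : Prop :=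
  ∀ j, Nat.card {x : ZMod N // f x = j} = n j

/-- Cyclic equivalence of colorings: one is obtained from the other by a rotation `x ↦ x + c`. -/
def cyclicSetoid (N m : ℕ) (n : Fin m → ℕ) :
    Setoid {f : ZMod N → Fin m // IsColoring N m n f} where
  r f g := ∃ c : ZMod N, ∀ x, (g : ZMod N → Fin m) x = (f : ZMod N → Fin m) (x + c)
  iseqv := by
    refine ⟨fun f => ⟨0, fun x => by rw [add_zero]⟩, ?_, ?_⟩
    · rintro f g ⟨c, h⟩
      exact ⟨-c, fun x => by rw [h, neg_add_cancel_right]⟩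
    · rintro f g k ⟨c, h1⟩ ⟨d, h2⟩
      exact ⟨d + c, fun x => by rw [h2, h1, add_assoc]⟩

/-- The number of cyclic necklaces: orbits of colorings under rotations. -/
noncomputable def gammaC (N m : ℕ) (n : Fin m → ℕ) : ℕ :=
  Nat.card (Quotient (cyclicSetoid N m n))

/-- Dihedral equivalence of colorings: one is obtained from the other by an element of
the subgroup of permutations of `ZMod N` generated by `x ↦ x + 1` and `x ↦ -x`. -/
def dihedralSetoid (N m : ℕ) (n : Fin m → ℕ) :
    Setoid {f : ZMod N → Fin m // IsColoring N m n f} where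
  r f g := ∃ σ ∈ Subgroup.closure
      ({Equiv.addRight (1 : ZMod N), Equiv.neg (ZMod N)} : Set (Equiv.Perm (ZMod N))),
      ∀ x, (g : ZMod N → Fin m) x = (f : ZMod N → Fin m) (σ x)
  iseqv := by
    refine ⟨fun f => ⟨1, one_mem _, fun x => rfl⟩, ?_, ?_⟩
    · rintro f g ⟨σ, hσ, h⟩
      exact ⟨σ⁻¹, inv_mem hσ, fun x => by rw [h]; exact congrArg (f : ZMod N → Fin m) (σ.apply_symm_apply x).symm⟩
    · rintro f g k ⟨σ, hσ, h1⟩ ⟨τ, hτ, h2⟩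
      exact ⟨σ * τ, mul_mem hσ hτ, fun x => by rw [h2, h1, Equiv.Perm.mul_apply]⟩

/-- The number of dihedral necklaces: orbits of colorings under rotations and reflections. -/
noncomputable def gammaD (N m : ℕ) (n : Fin m → ℕ) : ℕ :=
  Nat.card (Quotient (dihedralSetoid N m n))

/-!
A coloring fixed by the rotation `x ↦ x + c` is constant on the cosets of `H = ⟨c⟩`, a subgroup of
order `g`, so it is the pullback of a coloring of `ZMod N ⧸ H` whose fibers are `g` times smaller.
Hence there is none unless `g` divides every `n j`, and otherwise they are counted by the colorings
of `N / g` points with multiplicities `n j / g`. Those are counted by orbit–stabilizer: permutations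
act transitively on the colorings with given multiplicities `k`, and the stabilizer of one of them
is the product of the permutation groups of its fibers, of order `∏ j, (k j)!`.
-/

open Equiv MulAction Function

section FiberCounting

variable {α ι : Type*}

theorem DomMulAct.mem_orbit_perm_iff_card_fiber_eq [Finite α] {F F₀ : α → ι} :
    F ∈ orbit (Perm α)ᵈᵐᵃ F₀ ↔
      ∀ j, Nat.card {a // F a = j} = Nat.card {a // F₀ a = j} := by
  constructor
  · rintro ⟨σ, rfl⟩ j
    exact Nat.card_congr (subtypeEquiv (mk.symm σ) fun _ => Iff.rfl)
  · intro h
    let e := fun j => (Finite.card_eq.mp (h j)).some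
    exact ⟨mk (ofFiberEquiv e), funext (ofFiberEquiv_map e)⟩

theorem exists_card_fiber_eq [Finite α] [Fintype ι] (k : ι → ℕ)
    (hk : ∑ j, k j = Nat.card α) :
    ∃ F : α → ι, ∀ j, Nat.card {a // F a = j} = k j := by
  obtain ⟨e⟩ := Finite.card_eq.mp (show Nat.card α = Nat.card (Σ j, Fin (k j)) by simp [hk])
  refine ⟨fun a => (e a).1, fun j => ?_⟩
  rw [Nat.card_congr ((e.subtypeEquiv fun _ => Iff.rfl).trans (sigmaSubtype j))]
  simp

theorem card_fun_card_fiber_eq_multinomial [Finite α] [Fintype ι] (k : ι → ℕ)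
    (hk : ∑ j, k j = Nat.card α) :
    Nat.card {F : α → ι // ∀ j, Nat.card {a // F a = j} = k j} =
      Nat.multinomial Finset.univ k := by
  classical
  have := Fintype.ofFinite α
  obtain ⟨F₀, hF₀⟩ := exists_card_fiber_eq k hk
  have horbit : {F : α → ι // ∀ j, Nat.card {a // F a = j} = k j} ≃ orbit (Perm α)ᵈᵐᵃ F₀ :=
    subtypeEquivRight fun F => by
      simp only [DomMulAct.mem_orbit_perm_iff_card_fiber_eq, hF₀]
  have hstab : Nat.card (stabilizer (Perm α)ᵈᵐᵃ F₀) = ∏ j, (k j).factorial := by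
    rw [Nat.card_congr (subtypeEquiv (q := fun σ : Perm α => F₀ ∘ σ = F₀) DomMulAct.mk.symm
      fun _ => DomMulAct.mem_stabilizer_iff), Nat.card_eq_fintype_card,
      DomMulAct.stabilizer_card]
    simp [← Nat.card_eq_fintype_card, hF₀]
  have hcount := Nat.card_congr (orbitProdStabilizerEquivGroup (Perm α)ᵈᵐᵃ F₀)
  rw [Nat.card_prod, hstab, ← Nat.card_congr horbit, Nat.card_congr DomMulAct.mk.symm,
    Nat.card_perm, ← hk, ← Nat.multinomial_spec, mul_comm] at hcount
  exact Nat.eq_of_mul_eq_mul_left (Finset.prod_pos fun j _ => Nat.factorial_pos (k j)) hcount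

end FiberCounting

section PeriodicFunctions

variable {G α : Type*} [AddGroup G] (H : AddSubgroup G)

theorem periodic_iff_forall_mem_zmultiples {f : G → α} {c : G} :
    Periodic f c ↔ ∀ h ∈ AddSubgroup.zmultiples c, Periodic f h := by
  refine ⟨?_, fun hf => hf c (AddSubgroup.mem_zmultiples c)⟩
  rintro hf _ ⟨k, rfl⟩
  exact hf.zsmul k

def AddSubgroup.periodicFunEquiv : {f : G → α // ∀ h ∈ H, Periodic f h} ≃ (G ⧸ H → α) :=
  (subtypeEquivRight fun f => by
      constructor
      · intro hf x y hxy
        simpa using (hf _ (QuotientAddGroup.leftRel_apply.mp hxy) x).symm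
      · intro hf h hh x
        exact (hf (x := x) (QuotientAddGroup.leftRel_apply.mpr (by simpa using hh))).symm).trans
    (Setoid.liftEquiv (QuotientAddGroup.leftRel H))

theorem AddSubgroup.periodicFunEquiv_symm_apply (F : G ⧸ H → α) (x : G) :
    ((H.periodicFunEquiv.symm F : {f : G → α // ∀ h ∈ H, Periodic f h}) : G → α) x = F x :=
  rfl

theorem AddSubgroup.card_fiber_comp_mk (F : G ⧸ H → α) (j : α) :
    Nat.card {x : G // F x = j} = Nat.card H * Nat.card {q // F q = j} := by
  rw [← Nat.card_prod]
  exact Nat.card_congr ((subtypeEquivRight fun x => Iff.rfl).trans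
    (QuotientAddGroup.preimageMkEquivAddSubgroupProdSet H (F ⁻¹' {j})))

theorem AddSubgroup.card_periodic_fun_card_fiber_eq_card_quotient (k : α → ℕ) :
    Nat.card {f : G → α // (∀ j, Nat.card {x // f x = j} = k j) ∧ ∀ h ∈ H, Periodic f h} =
      Nat.card {F : G ⧸ H → α // ∀ j, Nat.card H * Nat.card {q // F q = j} = k j} := by
  refine Nat.card_congr ((subtypeEquivRight fun f => and_comm).trans
    ((subtypeSubtypeEquivSubtypeInter (fun f : G → α => ∀ h ∈ H, Periodic f h) _).symm.trans
      (subtypeEquiv H.periodicFunEquiv fun f => ?_)))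
  obtain ⟨F, rfl⟩ := H.periodicFunEquiv.symm.surjective f
  simp only [apply_symm_apply, AddSubgroup.periodicFunEquiv_symm_apply, H.card_fiber_comp_mk]

theorem AddSubgroup.card_periodic_fun_card_fiber_eq [Finite G] {ι : Type*} [Fintype ι]
    (k : ι → ℕ) (hk : ∑ j, k j = Nat.card G) :
    Nat.card {f : G → ι // (∀ j, Nat.card {x // f x = j} = k j) ∧ ∀ h ∈ H, Periodic f h} =
      if ∀ j, Nat.card H ∣ k j then Nat.multinomial Finset.univ (fun j => k j / Nat.card H)
      else 0 := by
  rw [H.card_periodic_fun_card_fiber_eq_card_quotient]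
  have hH : 0 < Nat.card H := Nat.card_pos
  split_ifs with hdvd
  · have hsum : ∑ j, k j / Nat.card H = Nat.card (G ⧸ H) := by
      refine Nat.eq_of_mul_eq_mul_right hH ?_
      rw [Finset.sum_mul, Finset.sum_congr rfl fun j _ => Nat.div_mul_cancel (hdvd j), hk,
        H.card_eq_card_quotient_mul_card_addSubgroup]
    rw [← card_fun_card_fiber_eq_multinomial _ hsum]
    refine Nat.card_congr (subtypeEquivRight fun F => forall_congr' fun j => ?_)
    rw [Nat.eq_div_iff_mul_eq_left hH.ne' (hdvd j), mul_comm, eq_comm]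
  · rw [Nat.card_eq_zero]
    exact .inl ⟨fun ⟨F, hF⟩ => hdvd fun j => ⟨_, (hF j).symm⟩⟩

end PeriodicFunctions

theorem card_colorings_fixed_by_rotation_general (m N : ℕ) (hN : 1 ≤ N)
    (n : Fin m → ℕ) (hsum : ∑ j, n j = N) (c : ZMod N) (g : ℕ) (hg : addOrderOf c = g) :
    Nat.card {f : ZMod N → Fin m // IsColoring N m n f ∧ ∀ x, f (x + c) = f x} =
      (if g ∣ Finset.univ.gcd n then
        Nat.multinomial Finset.univ (fun j => n j / g) else 0) := by
  have : NeZero N := ⟨by omega⟩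
  have hcard : Nat.card (AddSubgroup.zmultiples c) = g := hg ▸ Nat.card_zmultiples c
  have key := (AddSubgroup.zmultiples c).card_periodic_fun_card_fiber_eq n
    (hsum.trans (Nat.card_zmod N).symm)
  simp only [hcard, ← periodic_iff_forall_mem_zmultiples] at key
  simp only [Finset.dvd_gcd_iff, Finset.mem_univ, true_implies]
  exact key

/-- The number of colorings with multiplicities `n` fixed by the rotation `x ↦ x + c`,
where `c` has additive order `g`, is `P(n/g)` if `g ∣ Δ` and `0` otherwise. -/
theorem card_colorings_fixed_by_rotation (m N : ℕ) (hm : 1 ≤ m) (hN : 1 ≤ N)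
    (n : Fin m → ℕ) (hsum : ∑ j, n j = N) (c : ZMod N) (g : ℕ) (hg : addOrderOf c = g) :
    Nat.card {f : ZMod N → Fin m // IsColoring N m n f ∧ ∀ x, f (x + c) = f x} =
      (if g ∣ Finset.univ.gcd n then
        Nat.multinomial Finset.univ (fun j => n j / g) else 0) :=
  card_colorings_fixed_by_rotation_general m N hN n hsum c g hg
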